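/- arXiv:1503.01271 — 4 statements merged into one kernel-verified Lean document; each statement's English description precedes it below -/
import Mathlib

section
/- Let c > 0, σ > 0, and suppose m(z) satisfies the Marchenko–Pastur fixed point equation m(z) = 1/(-z(1 + σ²c·m(z)) + σ²(1-c)) at a point z where all denominators are nonzero. Define w(z) = z(1 + σ²c·m(z))² - σ²(1-c)(1 + σ²c·m(z)) and φ(λ) = (λ + σ²)(λ + σ²c)/λ. Then φ(w(z)) = z, provided w(z) ≠ 0. -/
/-!
Write `u = 1 + σ²c m` and `D = -z u + σ²(1 - c)`, so that the fixed point equation reads `m D = 1`.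
Then `w = -u D` identically, and the fixed point equation gives `w + σ²c = -D` and `w + σ² = z u`;
hence `(w + σ²)(w + σ²c) = -z u D = z w`. As `w = -u D`, `w ≠ 0` forces `D ≠ 0`, so
`m = 1 / D` really does clear to `m D = 1`.
-/

section CommRing

variable {K : Type*} [CommRing K] {s c z m : K}

def mpDenom (s c z m : K) : K := -z * (1 + s * c * m) + s * (1 - c)

def mpW (s c z m : K) : K := z * (1 + s * c * m) ^ 2 - s * (1 - c) * (1 + s * c * m)

theorem mpW_eq_neg_mul_mpDenom : mpW s c z m = -(1 + s * c * m) * mpDenom s c z m := by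
  unfold mpW mpDenom; ring

theorem mpW_add_mul_eq_neg_mpDenom (hmD : m * mpDenom s c z m = 1) :
    mpW s c z m + s * c = -mpDenom s c z m := by
  rw [mpW_eq_neg_mul_mpDenom]
  linear_combination -(s * c) * hmD

theorem mpW_add_eq_mul (hmD : m * mpDenom s c z m = 1) :
    mpW s c z m + s = z * (1 + s * c * m) := by
  unfold mpW mpDenom at *
  linear_combination -(s * c) * hmD

end CommRing

section Field

variable {K : Type*} [Field K] {s c z m : K}

def spikeMap (s c l : K) : K := (l + s) * (l + s * c) / l

theorem mpDenom_ne_zero_of_mpW_ne_zero (hw : mpW s c z m ≠ 0) : mpDenom s c z m ≠ 0 := by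
  rw [mpW_eq_neg_mul_mpDenom] at hw
  exact right_ne_zero_of_mul hw

theorem mul_mpDenom_eq_one (hw : mpW s c z m ≠ 0) (hfix : m = 1 / mpDenom s c z m) :
    m * mpDenom s c z m = 1 := by
  rwa [eq_div_iff (mpDenom_ne_zero_of_mpW_ne_zero hw)] at hfix

theorem spikeMap_mpW (hmD : m * mpDenom s c z m = 1) (hw : mpW s c z m ≠ 0) :
    spikeMap s c (mpW s c z m) = z := by
  rw [spikeMap, div_eq_iff hw, mpW_add_eq_mul hmD, mpW_add_mul_eq_neg_mpDenom hmD,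
    mpW_eq_neg_mul_mpDenom]
  ring

end Field

theorem phi_w_eq_z_general (c σ : ℝ) (z m : ℂ)
    (hfix : m = 1 / (-z * (1 + (σ : ℂ) ^ 2 * (c : ℂ) * m) + (σ : ℂ) ^ 2 * (1 - (c : ℂ))))
    (w : ℂ)
    (hw : w = z * (1 + (σ : ℂ) ^ 2 * (c : ℂ) * m) ^ 2
        - (σ : ℂ) ^ 2 * (1 - (c : ℂ)) * (1 + (σ : ℂ) ^ 2 * (c : ℂ) * m))
    (hw0 : w ≠ 0) :
    (w + (σ : ℂ) ^ 2) * (w + (σ : ℂ) ^ 2 * (c : ℂ)) / w = z := by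
  change w = mpW _ _ z m at hw
  subst hw
  exact spikeMap_mpW (mul_mpDenom_eq_one hw0 hfix) hw0

/-- If `m` satisfies the Marchenko–Pastur fixed point equation
`m = 1/(-z(1 + σ²c m) + σ²(1-c))` at a point `z` where the denominator is nonzero,
then with `w = z(1 + σ²c m)² - σ²(1-c)(1 + σ²c m)` and `φ(λ) = (λ + σ²)(λ + σ²c)/λ`,
we have `φ(w) = z`, provided `w ≠ 0`. -/
theorem phi_w_eq_z (c σ : ℝ) (hc : 0 < c) (hσ : 0 < σ) (z m : ℂ)
    (hden : -z * (1 + (σ : ℂ) ^ 2 * (c : ℂ) * m) + (σ : ℂ) ^ 2 * (1 - (c : ℂ)) ≠ 0)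
    (hfix : m = 1 / (-z * (1 + (σ : ℂ) ^ 2 * (c : ℂ) * m) + (σ : ℂ) ^ 2 * (1 - (c : ℂ))))
    (w : ℂ)
    (hw : w = z * (1 + (σ : ℂ) ^ 2 * (c : ℂ) * m) ^ 2
        - (σ : ℂ) ^ 2 * (1 - (c : ℂ)) * (1 + (σ : ℂ) ^ 2 * (c : ℂ) * m))
    (hw0 : w ≠ 0) :
    (w + (σ : ℂ) ^ 2) * (w + (σ : ℂ) ^ 2 * (c : ℂ)) / w = z :=
  phi_w_eq_z_general c σ z m hfix w hw hw0
end

section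
/- Let c > 0, α > 0 with sinc(αc/2) ≠ ±1. For β ∈ ℝ define κ(β) = (1/(1 - sinc(αc/2)²)) · (sinc(βc/2)² + sinc((β-α)c/2)² - 2·sinc(αc/2)·sinc(βc/2)·sinc((β-α)c/2)). Then κ(β) ≤ 1 for all β, and κ(β) = 1 if and only if β = 0 or β = α. -/
/-- `sinc(x) = sin(x)/x` for `x ≠ 0`, `sinc(0) = 1`. -/
noncomputable def sinc (x : ℝ) : ℝ := if x = 0 then 1 else Real.sin x / x

/-!
With `φ = 2t - 1`, the values `sinc θ` are the inner products `⟨e^{iθφ}, 1⟩` in `L²[-1, 1]`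
normalized so that `‖1‖ = 1`. Writing `x = βc/2` and `m = αc/2`, the quantity
`(1 - sinc² m)(1 - κ(β))` is then the Gram determinant of `1, e^{imφ}, e^{ixφ}`, i.e.
`(1 - sinc² m)` times the squared distance from `e^{ixφ}` to `span {1, e^{imφ}}`. This is
nonnegative, and it vanishes only if `e^{ixφ} = l + u e^{imφ}` on `[-1, 1]`; differentiating
at `0` once and twice gives `x = um` and `x² = um²`, so `x = 0` or `x = m`.
-/

open Filter Topology Set

lemma Filter.EventuallyEq.eventuallyEq_zero_of_hasDerivAt {f f' : ℝ → ℝ} {a c : ℝ}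
    (hf : ∀ x, HasDerivAt f (f' x) x) (h : f =ᶠ[𝓝 a] fun _ => c) : f' =ᶠ[𝓝 a] fun _ => 0 :=
  h.eventually_nhds.mono fun x hx =>
    (hf x).unique ((hasDerivAt_const x c).congr_of_eventuallyEq hx)

lemma eqOn_zero_of_intervalIntegral_eq_zero {f : ℝ → ℝ} {a b : ℝ} (hab : a < b)
    (hf : ContinuousOn f (Icc a b)) (hf₀ : ∀ x ∈ Icc a b, 0 ≤ f x)
    (h : ∫ x in a..b, f x = 0) : EqOn f 0 (Icc a b) := by
  intro x hx
  by_contra hne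
  have hpos : 0 < f x := (hf₀ x hx).lt_of_ne' hne
  exact (intervalIntegral.integral_pos hab hf (fun y hy => hf₀ y (Ioc_subset_Icc_self hy))
    ⟨x, hx, hpos⟩).ne' h

namespace Real

lemma sinc_sq_lt_one {x : ℝ} (hx : x ≠ 0) : sinc x ^ 2 < 1 := by
  rw [sq_lt_one_iff_abs_lt_one, sinc_of_ne_zero hx, abs_div, div_lt_one (abs_pos.mpr hx)]
  exact abs_sin_lt_abs hx

lemma integral_cos_mul_eq_two_mul_sinc (θ : ℝ) : ∫ φ in -1..1, cos (θ * φ) = 2 * sinc θ := by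
  rcases eq_or_ne θ 0 with rfl | hθ
  · norm_num
  · rw [intervalIntegral.integral_comp_mul_left (fun φ => cos φ) hθ, integral_cos,
      sinc_of_ne_zero hθ]
    simp only [mul_one, mul_neg, sin_neg, sub_neg_eq_add, smul_eq_mul]
    field_simp
    ring

lemma hasDerivAt_sin_mul (x φ : ℝ) : HasDerivAt (fun φ => sin (x * φ)) (x * cos (x * φ)) φ := by
  simpa [mul_comm] using ((hasDerivAt_id φ).const_mul x).sin

lemma hasDerivAt_cos_mul (x φ : ℝ) :
    HasDerivAt (fun φ => cos (x * φ)) (-(x * sin (x * φ))) φ := by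
  simpa [mul_comm] using ((hasDerivAt_id φ).const_mul x).cos

/-- `|e^{ixφ} - l - u e^{imφ}|²`. -/
noncomputable def residualSq (x m l u φ : ℝ) : ℝ :=
  (cos (x * φ) - l - u * cos (m * φ)) ^ 2 + (sin (x * φ) - u * sin (m * φ)) ^ 2

lemma residualSq_nonneg (x m l u φ : ℝ) : 0 ≤ residualSq x m l u φ := by
  unfold residualSq
  positivity

lemma continuous_residualSq (x m l u : ℝ) : Continuous (residualSq x m l u) := by
  unfold residualSq
  fun_prop

lemma residualSq_eq (x m l u φ : ℝ) :
    residualSq x m l u φ = 1 + l ^ 2 + u ^ 2 - 2 * l * cos (x * φ)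
      - 2 * u * cos ((x - m) * φ) + 2 * l * u * cos (m * φ) := by
  rw [residualSq, sub_mul, cos_sub]
  linear_combination sin_sq_add_cos_sq (x * φ) + u ^ 2 * sin_sq_add_cos_sq (m * φ)

lemma integral_residualSq (x m l u : ℝ) :
    ∫ φ in -1..1, residualSq x m l u φ = 2 * (1 + l ^ 2 + u ^ 2 - 2 * l * sinc x
      - 2 * u * sinc (x - m) + 2 * l * u * sinc m) := by
  have hint (θ c : ℝ) : IntervalIntegrable (fun φ => c * cos (θ * φ)) MeasureTheory.volume (-1) 1 :=
    (by fun_prop : Continuous fun φ => c * cos (θ * φ)).intervalIntegrable _ _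
  simp_rw [residualSq_eq]
  rw [intervalIntegral.integral_add ((intervalIntegrable_const.sub (hint _ _)).sub (hint _ _))
      (hint _ _),
    intervalIntegral.integral_sub (intervalIntegrable_const.sub (hint _ _)) (hint _ _),
    intervalIntegral.integral_sub intervalIntegrable_const (hint _ _)]
  simp only [intervalIntegral.integral_const_mul, integral_cos_mul_eq_two_mul_sinc,
    intervalIntegral.integral_const]
  simp only [sub_neg_eq_add, smul_eq_mul]
  ring

lemma eq_zero_or_eq_of_residualSq_eventuallyEq_zero {x m l u : ℝ} (hm : m ≠ 0)
    (h : residualSq x m l u =ᶠ[𝓝 0] fun _ => 0) : x = 0 ∨ x = m := by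
  have hparts : ∀ᶠ φ in 𝓝 0,
      cos (x * φ) - l - u * cos (m * φ) = 0 ∧ sin (x * φ) - u * sin (m * φ) = 0 :=
    h.mono fun φ hφ => by
      simpa using (add_eq_zero_iff_of_nonneg (sq_nonneg _) (sq_nonneg _)).mp hφ
  have hsin : (fun φ => sin (x * φ) - u * sin (m * φ)) =ᶠ[𝓝 0] fun _ => 0 :=
    hparts.mono fun _ hφ => hφ.2
  have hcos : (fun φ => cos (x * φ) - u * cos (m * φ)) =ᶠ[𝓝 0] fun _ => l :=
    hparts.mono fun _ hφ => by linear_combination hφ.1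
  have hsin' := hsin.eventuallyEq_zero_of_hasDerivAt fun φ =>
    (hasDerivAt_sin_mul x φ).sub ((hasDerivAt_sin_mul m φ).const_mul u)
  have hcos' := hcos.eventuallyEq_zero_of_hasDerivAt fun φ =>
    (hasDerivAt_cos_mul x φ).sub ((hasDerivAt_cos_mul m φ).const_mul u)
  have hcos'' := hcos'.eventuallyEq_zero_of_hasDerivAt fun φ =>
    ((hasDerivAt_sin_mul x φ).const_mul x).neg.sub
      (((hasDerivAt_sin_mul m φ).const_mul m).neg.const_mul u)
  have hx : x = u * m := by simpa [sub_eq_zero] using hsin'.self_of_nhds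
  have hx_sq : x ^ 2 = u * m ^ 2 := by
    have := hcos''.self_of_nhds
    simp only [mul_zero, cos_zero, mul_one] at this
    linear_combination -this
  have hu : u * (u - 1) = 0 := by
    apply mul_right_cancel₀ (pow_ne_zero 2 hm)
    linear_combination (-(x + u * m)) * hx + hx_sq
  rcases mul_eq_zero.mp hu with hu | hu
  · left
    rw [hx, hu, zero_mul]
  · right
    rw [hx, sub_eq_zero.mp hu, one_mul]

/-- The Gram determinant of `1, e^{imφ}, e^{ixφ}` in `L²[-1, 1]` with `‖1‖ = 1`. -/
noncomputable def sincGramDet (x m : ℝ) : ℝ :=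
  1 - sinc m ^ 2 - sinc x ^ 2 - sinc (x - m) ^ 2 + 2 * sinc m * sinc x * sinc (x - m)

/-- These `l, u` are the coefficients of the orthogonal projection of `e^{ixφ}` onto
`span {1, e^{imφ}}`. -/
lemma integral_residualSq_projection (x : ℝ) {m : ℝ} (hm : m ≠ 0) :
    ∫ φ in -1..1, residualSq x m ((sinc x - sinc m * sinc (x - m)) / (1 - sinc m ^ 2))
        ((sinc (x - m) - sinc m * sinc x) / (1 - sinc m ^ 2)) φ
      = 2 * sincGramDet x m / (1 - sinc m ^ 2) := by
  have hden : 1 - sinc m ^ 2 ≠ 0 := (sub_pos.2 (sinc_sq_lt_one hm)).ne'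
  rw [integral_residualSq, sincGramDet]
  field_simp
  ring

lemma sincGramDet_nonneg (x : ℝ) {m : ℝ} (hm : m ≠ 0) : 0 ≤ sincGramDet x m := by
  have hden : 0 < 1 - sinc m ^ 2 := sub_pos.2 (sinc_sq_lt_one hm)
  have hint := integral_residualSq_projection x hm ▸
    intervalIntegral.integral_nonneg (by norm_num) fun φ _ => residualSq_nonneg _ _ _ _ φ
  rw [le_div_iff₀ hden, zero_mul] at hint
  linarith

lemma sincGramDet_eq_zero_iff (x : ℝ) {m : ℝ} (hm : m ≠ 0) :
    sincGramDet x m = 0 ↔ x = 0 ∨ x = m := by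
  constructor
  · intro hdet
    have hint := integral_residualSq_projection x hm
    rw [hdet, mul_zero, zero_div] at hint
    have hzero := eqOn_zero_of_intervalIntegral_eq_zero (by norm_num)
      (continuous_residualSq _ _ _ _).continuousOn (fun φ _ => residualSq_nonneg _ _ _ _ φ) hint
    exact eq_zero_or_eq_of_residualSq_eventuallyEq_zero hm
      (eventually_of_mem (Icc_mem_nhds (by norm_num) (by norm_num)) hzero)
  · rintro (rfl | rfl) <;> simp only [sincGramDet, zero_sub, sinc_neg, sinc_zero, sub_self] <;> ring

end Real

theorem kappa_le_one_general (c α : ℝ) (hc : 0 < c) (hα : 0 < α)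
    (κ : ℝ → ℝ)
    (hκ : ∀ β : ℝ, κ β = (1 / (1 - sinc (α * c / 2) ^ 2)) *
        (sinc (β * c / 2) ^ 2 + sinc ((β - α) * c / 2) ^ 2
          - 2 * sinc (α * c / 2) * sinc (β * c / 2) * sinc ((β - α) * c / 2))) :
    (∀ β : ℝ, κ β ≤ 1) ∧ (∀ β : ℝ, κ β = 1 ↔ β = 0 ∨ β = α) := by
  have hsinc : sinc = Real.sinc := rfl
  have hm : α * c / 2 ≠ 0 := by positivity
  have hden : 0 < 1 - Real.sinc (α * c / 2) ^ 2 := sub_pos.2 (Real.sinc_sq_lt_one hm)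
  have hκ_det (β : ℝ) :
      κ β = 1 - Real.sincGramDet (β * c / 2) (α * c / 2) / (1 - Real.sinc (α * c / 2) ^ 2) := by
    rw [hκ, hsinc, Real.sincGramDet, show (β - α) * c / 2 = β * c / 2 - α * c / 2 by ring]
    field_simp
    ring
  refine ⟨fun β => ?_, fun β => ?_⟩
  · rw [hκ_det, sub_le_self_iff]
    exact div_nonneg (Real.sincGramDet_nonneg _ hm) hden.le
  · rw [hκ_det, sub_eq_self, div_eq_zero_iff, or_iff_left hden.ne',
      Real.sincGramDet_eq_zero_iff _ hm]
    simp [hc.ne']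

/-- The limiting G-MUSIC localization function
`κ(β) = (sinc(βc/2)² + sinc((β-α)c/2)² - 2 sinc(αc/2) sinc(βc/2) sinc((β-α)c/2))
        / (1 - sinc(αc/2)²)`
satisfies `κ(β) ≤ 1`, with equality iff `β = 0` or `β = α`. -/
theorem kappa_le_one (c α : ℝ) (hc : 0 < c) (hα : 0 < α)
    (hs : sinc (α * c / 2) ≠ 1 ∧ sinc (α * c / 2) ≠ -1)
    (κ : ℝ → ℝ)
    (hκ : ∀ β : ℝ, κ β = (1 / (1 - sinc (α * c / 2) ^ 2)) *
        (sinc (β * c / 2) ^ 2 + sinc ((β - α) * c / 2) ^ 2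
          - 2 * sinc (α * c / 2) * sinc (β * c / 2) * sinc ((β - α) * c / 2))) :
    (∀ β : ℝ, κ β ≤ 1) ∧ (∀ β : ℝ, κ β = 1 ↔ β = 0 ∨ β = α) :=
  kappa_le_one_general c α hc hα κ hκ
end

section
/- Let σ > 0 and 0 < c. The Marchenko–Pastur density f(x) = √((x - x⁻)(x⁺ - x))/(2σ²cπx) on [x⁻, x⁺], where x⁻ = σ²(1-√c)² and x⁺ = σ²(1+√c)², together with an atom of mass (1 - 1/c)⁺ at 0, defines a probability measure, i.e., (1 - 1/c)⁺ + ∫_{x⁻}^{x⁺} f(x) dx = 1. -/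
open scoped Real

open Real Set

/-!
Up to the constant `2σ²cπ`, the density is `√((x - a)(b - x)) / x` with `a = x⁻`, `b = x⁺`.
For `0 ≤ a < b` this function has the primitive
`√((x - a)(b - x)) + (a + b)/2 · arcsin ((2x - a - b)/(b - a)) - √(ab) · arcsin (u x)`,
`u x = ((a + b)x - 2ab)/((b - a)x)`, so its integral over `[a, b]` is `π ((a + b)/2 - √(ab))`.
At the Marchenko–Pastur edges `(a + b)/2 = σ²(1 + c)` and `√(ab) = σ²|1 - c|`, so the
continuous part has mass `min 1 c / c`, exactly what the atom `(1 - 1/c)⁺` misses.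
-/

theorem HasDerivAt.arcsin_of_one_sub_sq_eq {f : ℝ → ℝ} {f' r x : ℝ} (hf : HasDerivAt f f' x)
    (hr : 0 < r) (h : 1 - f x ^ 2 = r ^ 2) :
    HasDerivAt (fun y => arcsin (f y)) (f' / r) x := by
  have hlt : f x ^ 2 < 1 := by nlinarith
  have hne : f x ≠ -1 ∧ f x ≠ 1 := by
    constructor <;> rintro heq <;> rw [heq] at hlt <;> norm_num at hlt
  refine ((hasDerivAt_arcsin hne.1 hne.2).comp x hf).congr_deriv ?_
  rw [h, sqrt_sq hr.le]
  ring

section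

variable {a b x : ℝ}

theorem hasDerivAt_sqrt_sub_mul_sub (hx : x ∈ Ioo a b) :
    HasDerivAt (fun y => √((y - a) * (b - y)))
      ((a + b - 2 * x) / (2 * √((x - a) * (b - x)))) x := by
  have hpos : 0 < (x - a) * (b - x) := mul_pos (by linarith [hx.1]) (by linarith [hx.2])
  have hpoly : HasDerivAt (fun y => (y - a) * (b - y)) (a + b - 2 * x) x :=
    ((hasDerivAt_id' x).sub_const a).mul ((hasDerivAt_id' x).const_sub b) |>.congr_deriv
      (by ring)
  exact hpoly.sqrt hpos.ne'

theorem hasDerivAt_arcsin_two_mul_sub_div (hx : x ∈ Ioo a b) :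
    HasDerivAt (fun y => arcsin ((2 * y - (a + b)) / (b - a)))
      (1 / √((x - a) * (b - x))) x := by
  obtain ⟨hax, hxb⟩ := hx
  have hpos : 0 < (x - a) * (b - x) := mul_pos (by linarith) (by linarith)
  have hba : 0 < b - a := by linarith
  have hv : HasDerivAt (fun y => (2 * y - (a + b)) / (b - a)) (2 / (b - a)) x :=
    (((hasDerivAt_id' x).const_mul 2).sub_const (a + b)).div_const (b - a) |>.congr_deriv
      (by ring)
  refine (hv.arcsin_of_one_sub_sq_eq (r := 2 * √((x - a) * (b - x)) / (b - a))
    (by positivity) ?_).congr_deriv ?_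
  · simp only [div_pow, mul_pow, sq_sqrt hpos.le]
    field_simp
    ring
  · field_simp

theorem hasDerivAt_sqrt_mul_mul_arcsin (ha : 0 ≤ a) (hx : x ∈ Ioo a b) :
    HasDerivAt (fun y => √(a * b) * arcsin (((a + b) * y - 2 * (a * b)) / ((b - a) * y)))
      (a * b / (x * √((x - a) * (b - x)))) x := by
  -- For `a = 0` the argument of `arcsin` is constantly `1`, but the factor `√(a * b)` vanishes.
  rcases ha.eq_or_lt with rfl | ha
  · simpa using hasDerivAt_const x (0 : ℝ)
  obtain ⟨hax, hxb⟩ := hx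
  have hx0 : 0 < x := ha.trans hax
  have hpos : 0 < (x - a) * (b - x) := mul_pos (by linarith) (by linarith)
  have hab : 0 < a * b := mul_pos ha (hx0.trans hxb)
  have hba : 0 < b - a := by linarith
  have hu : HasDerivAt (fun y => ((a + b) * y - 2 * (a * b)) / ((b - a) * y))
      (2 * (a * b) / ((b - a) * x ^ 2)) x := by
    refine (((hasDerivAt_id' x).const_mul (a + b)).sub_const (2 * (a * b))).div
      ((hasDerivAt_id' x).const_mul (b - a)) (by positivity) |>.congr_deriv ?_
    field_simp
    ring
  refine (hu.arcsin_of_one_sub_sq_eq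
    (r := 2 * √(a * b) * √((x - a) * (b - x)) / ((b - a) * x)) (by positivity) ?_
    |>.const_mul (√(a * b))).congr_deriv ?_
  · simp only [div_pow, mul_pow, sq_sqrt hpos.le, sq_sqrt hab.le]
    field_simp
    ring
  · field_simp

theorem continuousOn_sqrt_mul_mul_arcsin (ha : 0 ≤ a) (hab : a < b) :
    ContinuousOn (fun y => √(a * b) * arcsin (((a + b) * y - 2 * (a * b)) / ((b - a) * y)))
      (Icc a b) := by
  rcases ha.eq_or_lt with rfl | ha
  · simpa using continuousOn_const
  refine continuousOn_const.mul (continuous_arcsin.comp_continuousOn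
    (ContinuousOn.div (by fun_prop) (by fun_prop) fun y hy => ?_))
  have hy0 : 0 < y := ha.trans_le hy.1
  have hba : 0 < b - a := sub_pos.2 hab
  positivity

theorem integral_sqrt_sub_mul_sub_div_self (ha : 0 ≤ a) (hab : a < b) :
    ∫ x in a..b, √((x - a) * (b - x)) / x = π * ((a + b) / 2 - √(a * b)) := by
  have hba : b - a ≠ 0 := (sub_pos.2 hab).ne'
  set F := fun y => √((y - a) * (b - y)) + (a + b) / 2 * arcsin ((2 * y - (a + b)) / (b - a))
    - √(a * b) * arcsin (((a + b) * y - 2 * (a * b)) / ((b - a) * y)) with hF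
  have hderiv : ∀ x ∈ Ioo a b, HasDerivAt F (√((x - a) * (b - x)) / x) x := by
    intro x hx
    have hx0 : 0 < x := ha.trans_lt hx.1
    have hpos : 0 < (x - a) * (b - x) := mul_pos (sub_pos.2 hx.1) (sub_pos.2 hx.2)
    have hs : 0 < √((x - a) * (b - x)) := sqrt_pos.2 hpos
    refine (((hasDerivAt_sqrt_sub_mul_sub hx).add
      ((hasDerivAt_arcsin_two_mul_sub_div hx).const_mul ((a + b) / 2))).sub
      (hasDerivAt_sqrt_mul_mul_arcsin ha hx)).congr_deriv ?_
    field_simp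
    linear_combination (-2) * sq_sqrt hpos.le
  have hcont : ContinuousOn F (Icc a b) :=
    (by fun_prop : Continuous fun y => √((y - a) * (b - y))
      + (a + b) / 2 * arcsin ((2 * y - (a + b)) / (b - a))).continuousOn.sub
      (continuousOn_sqrt_mul_mul_arcsin ha hab)
  -- For `a = 0` the integrand is unbounded, but as a nonnegative derivative it is integrable.
  have hint : IntervalIntegrable (fun x => √((x - a) * (b - x)) / x) MeasureTheory.volume a b :=
    (intervalIntegrable_iff_integrableOn_Ioc_of_le hab.le).2 <|
      intervalIntegral.integrableOn_deriv_of_nonneg hcont hderiv fun x hx =>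
        div_nonneg (sqrt_nonneg _) (ha.trans hx.1.le)
  have hFb : F b = (a + b) / 2 * (π / 2) - √(a * b) * (π / 2) := by
    have hb : b ≠ 0 := (ha.trans_lt hab).ne'
    have hv : (2 * b - (a + b)) / (b - a) = 1 := by rw [div_eq_one_iff_eq hba]; ring
    have hu : ((a + b) * b - 2 * (a * b)) / ((b - a) * b) = 1 := by
      rw [div_eq_one_iff_eq (mul_ne_zero hba hb)]; ring
    simp only [hF, hv, hu, arcsin_one, sub_self, mul_zero, sqrt_zero, zero_add]
  have hFa : F a = -((a + b) / 2 * (π / 2)) + √(a * b) * (π / 2) := by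
    have hv : (2 * a - (a + b)) / (b - a) = -1 := by rw [div_eq_iff hba]; ring
    have hu : √(a * b) * arcsin (((a + b) * a - 2 * (a * b)) / ((b - a) * a))
        = -(√(a * b) * (π / 2)) := by
      rcases ha.eq_or_lt with rfl | ha
      · simp
      have hu_a : ((a + b) * a - 2 * (a * b)) / ((b - a) * a) = -1 := by
        rw [div_eq_iff (mul_ne_zero hba ha.ne')]; ring
      rw [hu_a, arcsin_neg_one]
      ring
    simp only [hF, hv, hu, arcsin_neg_one, sub_self, zero_mul, sqrt_zero, zero_add]
    ring
  rw [intervalIntegral.integral_eq_sub_of_hasDerivAt_of_le hab.le hcont hderiv hint, hFb, hFa]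
  ring

end

theorem marchenkoPastur_edges_half_add_sub_sqrt_mul (σ : ℝ) {c : ℝ} (hc : 0 ≤ c) :
    (σ ^ 2 * (1 - √c) ^ 2 + σ ^ 2 * (1 + √c) ^ 2) / 2
      - √(σ ^ 2 * (1 - √c) ^ 2 * (σ ^ 2 * (1 + √c) ^ 2)) = 2 * σ ^ 2 * min 1 c := by
  have hsc := sq_sqrt hc
  have hprod : σ ^ 2 * (1 - √c) ^ 2 * (σ ^ 2 * (1 + √c) ^ 2) = (σ ^ 2 * (1 - c)) ^ 2 := by
    linear_combination σ ^ 4 * (√c ^ 2 + c - 2) * hsc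
  rw [hprod, sqrt_sq_eq_abs, abs_mul, abs_of_nonneg (sq_nonneg σ), ← max_sub_min_eq_abs']
  linear_combination σ ^ 2 * hsc - σ ^ 2 * min_add_max 1 c

theorem max_one_sub_one_div_add_min_div {c : ℝ} (hc : 0 < c) :
    max (1 - 1 / c) 0 + min 1 c / c = 1 := by
  rcases le_total c 1 with h | h
  · rw [max_eq_right (by rw [sub_nonpos, le_div_iff₀ hc]; linarith), min_eq_right h,
      div_self hc.ne', zero_add]
  · rw [max_eq_left (by rw [sub_nonneg, div_le_iff₀ hc]; linarith), min_eq_left h]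
    ring

/-- The Marchenko–Pastur distribution with ratio `c` and scale `σ²` is a probability
measure: the atom `(1 - 1/c)⁺` at `0` plus the integral of the density
`√((x - x⁻)(x⁺ - x))/(2σ²cπx)` over `[x⁻, x⁺]` equals `1`. -/
theorem marchenko_pastur_total_mass (σ c : ℝ) (hσ : 0 < σ) (hc : 0 < c) :
    max (1 - 1 / c) 0
      + ∫ x in (σ ^ 2 * (1 - Real.sqrt c) ^ 2)..(σ ^ 2 * (1 + Real.sqrt c) ^ 2),
          Real.sqrt ((x - σ ^ 2 * (1 - Real.sqrt c) ^ 2)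
              * (σ ^ 2 * (1 + Real.sqrt c) ^ 2 - x))
            / (2 * σ ^ 2 * c * π * x)
      = 1 := by
  have hsc : 0 < √c := sqrt_pos.2 hc
  have hab : σ ^ 2 * (1 - √c) ^ 2 < σ ^ 2 * (1 + √c) ^ 2 :=
    mul_lt_mul_of_pos_left (by nlinarith) (by positivity)
  simp_rw [div_mul_eq_div_div_swap _ (2 * σ ^ 2 * c * π)]
  rw [intervalIntegral.integral_div, integral_sqrt_sub_mul_sub_div_self (by positivity) hab,
    marchenkoPastur_edges_half_add_sub_sqrt_mul σ hc.le]
  convert max_one_sub_one_div_add_min_div hc using 2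
  field_simp
end

section
/- Let σ > 0, c > 0 and z ∈ ℂ \ ℝ. If m satisfies m = 1/(-z(1 + σ²c·m) + σ²(1-c)), then with w = z(1 + σ²c·m)² - σ²(1-c)(1 + σ²c·m) and g = ((1-c) + c·z²·m')/( (1-c) - c·z·m ), where m' denotes the derivative of m at z, the identity g = w'/(1 + σ²c·m) holds, where w' is the derivative of w at z. -/
/-!
Write `s = 1 + σ²c m`. The fixed-point equation says `m (-z s + σ²(1-c)) = 1` on `ℂ \ ℝ`, an
open set, so differentiating it at `z` expresses `m'` implicitly through `m` and `z`. On the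
other hand the chain rule gives `w' = s² + (2 z s - σ²(1-c)) σ²c m'`; after clearing
denominators the claimed identity is a linear combination of these two relations.
-/

open Filter Topology

section FixedPoint

variable (K : ℂ) (a : ℝ)

/-- If the denominator vanished, the junk value `1 / 0 = 0` would force `μ = 0`, making the
denominator `a - u`, which is nonzero off the real line. -/
theorem mul_denom_eq_one_of_eq_one_div {u μ : ℂ} (hu : u.im ≠ 0)
    (hμ : μ = 1 / (-u * (1 + K * μ) + a)) : μ * (-u * (1 + K * μ) + a) = 1 := by
  have hD : -u * (1 + K * μ) + a ≠ 0 := by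
    intro hD
    rw [hD, div_zero] at hμ
    rw [hμ, mul_zero, add_zero, mul_one, neg_add_eq_zero] at hD
    exact hu (by rw [hD, Complex.ofReal_im])
  rwa [eq_div_iff hD] at hμ

theorem fixedPoint_deriv_eq_zero {m : ℂ → ℂ} {m' z : ℂ} (hz : z.im ≠ 0)
    (hfix : ∀ u : ℂ, u.im ≠ 0 → m u = 1 / (-u * (1 + K * m u) + a))
    (hm : HasDerivAt m m' z) :
    m' * (-z * (1 + K * m z) + a) + m z * (-(1 + K * m z) - z * (K * m')) = 0 := by
  have hprod : HasDerivAt (fun u => m u * (-u * (1 + K * m u) + a))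
      (m' * (-z * (1 + K * m z) + a) + m z * (-(1 + K * m z) - z * (K * m'))) z := by
    refine (hm.mul (((hasDerivAt_id' z).neg.mul ((hm.const_mul K).const_add 1)).add_const
      (a : ℂ))).congr_deriv ?_
    simp only [Pi.mul_apply, Pi.neg_apply]
    ring
  have hone : (fun u => m u * (-u * (1 + K * m u) + a)) =ᶠ[𝓝 z] fun _ => 1 := by
    filter_upwards [Complex.continuous_im.continuousAt.eventually_ne hz] with u hu
    exact mul_denom_eq_one_of_eq_one_div K a hu (hfix u hu)
  exact hprod.unique ((hasDerivAt_const z 1).congr_of_eventuallyEq hone)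

end FixedPoint

theorem hasDerivAt_mul_sq_sub_const_mul {m : ℂ → ℂ} {m' z : ℂ} (K b : ℂ)
    (hm : HasDerivAt m m' z) :
    HasDerivAt (fun u => u * (1 + K * m u) ^ 2 - b * (1 + K * m u))
      ((1 + K * m z) ^ 2 + (2 * z * (1 + K * m z) - b) * (K * m')) z := by
  have hs := (hm.const_mul K).const_add 1
  refine (((hasDerivAt_id' z).mul (hs.pow 2)).sub (hs.const_mul b)).congr_deriv ?_
  simp only [Pi.pow_apply, Nat.cast_ofNat]
  ring

theorem g_eq_wderiv_div_general (σ c : ℝ) (z : ℂ) (hz : z.im ≠ 0)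
    (m : ℂ → ℂ) (m' : ℂ)
    (hfix : ∀ u : ℂ, u.im ≠ 0 →
      m u = 1 / (-u * (1 + (σ : ℂ) ^ 2 * (c : ℂ) * m u) + (σ : ℂ) ^ 2 * (1 - (c : ℂ))))
    (hm : HasDerivAt m m' z)
    (hden1 : (1 - (c : ℂ)) - (c : ℂ) * z * m z ≠ 0)
    (hden2 : 1 + (σ : ℂ) ^ 2 * (c : ℂ) * m z ≠ 0)
    (w' : ℂ)
    (hw : HasDerivAt
      (fun u : ℂ => u * (1 + (σ : ℂ) ^ 2 * (c : ℂ) * m u) ^ 2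
        - (σ : ℂ) ^ 2 * (1 - (c : ℂ)) * (1 + (σ : ℂ) ^ 2 * (c : ℂ) * m u)) w' z) :
    ((1 - (c : ℂ)) + (c : ℂ) * z ^ 2 * m') / ((1 - (c : ℂ)) - (c : ℂ) * z * m z)
      = w' / (1 + (σ : ℂ) ^ 2 * (c : ℂ) * m z) := by
  have hfix' : ∀ u : ℂ, u.im ≠ 0 → m u = 1 / (-u * (1 + (σ : ℂ) ^ 2 * c * m u)
      + ((σ ^ 2 * (1 - c) : ℝ) : ℂ)) := by
    push_cast
    exact hfix
  have hfix_z := mul_denom_eq_one_of_eq_one_div _ _ hz (hfix' z hz)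
  have himplicit := fixedPoint_deriv_eq_zero _ _ hz hfix' hm
  have hw' := hw.unique (hasDerivAt_mul_sq_sub_const_mul _ _ hm)
  push_cast at hfix_z himplicit
  rw [div_eq_div_iff hden1 hden2]
  linear_combination (c * (-z * (1 + σ ^ 2 * c * m z) + σ ^ 2 * (1 - c))) * himplicit
    - (1 - c - c * z * m z) * hw'

/-- If `m` satisfies the Marchenko–Pastur fixed point equation on `ℂ \ ℝ` and has
derivative `m'` at `z ∈ ℂ \ ℝ`, then with
`w(u) = u(1 + σ²c m(u))² - σ²(1-c)(1 + σ²c m(u))` and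
`g = ((1-c) + c z² m')/((1-c) - c z m(z))`, the identity `g = w'(z)/(1 + σ²c m(z))`
holds. -/
theorem g_eq_wderiv_div (σ c : ℝ) (hσ : 0 < σ) (hc : 0 < c) (z : ℂ) (hz : z.im ≠ 0)
    (m : ℂ → ℂ) (m' : ℂ)
    (hfix : ∀ u : ℂ, u.im ≠ 0 →
      m u = 1 / (-u * (1 + (σ : ℂ) ^ 2 * (c : ℂ) * m u) + (σ : ℂ) ^ 2 * (1 - (c : ℂ))))
    (hm : HasDerivAt m m' z)
    (hden1 : (1 - (c : ℂ)) - (c : ℂ) * z * m z ≠ 0)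
    (hden2 : 1 + (σ : ℂ) ^ 2 * (c : ℂ) * m z ≠ 0)
    (w' : ℂ)
    (hw : HasDerivAt
      (fun u : ℂ => u * (1 + (σ : ℂ) ^ 2 * (c : ℂ) * m u) ^ 2
        - (σ : ℂ) ^ 2 * (1 - (c : ℂ)) * (1 + (σ : ℂ) ^ 2 * (c : ℂ) * m u)) w' z) :
    ((1 - (c : ℂ)) + (c : ℂ) * z ^ 2 * m') / ((1 - (c : ℂ)) - (c : ℂ) * z * m z)
      = w' / (1 + (σ : ℂ) ^ 2 * (c : ℂ) * m z) :=
  g_eq_wderiv_div_general σ c z hz m m' hfix hm hden1 hden2 w' hw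
end
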